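/- Let A be an m×m real symmetric positive definite matrix, b ∈ ℝ^m, q(x) = ½xᵀAx − xᵀb, x ∈ ℝ^m, g = Ax − b, and let π₁,…,π_{n̂} be the block projections of a partition of {1,…,m} with π_n(g) ≠ 0 for all n. Let D_n = ⟨g, π_n(g)⟩, H_{n,m'} = ⟨π_n(g), A π_{m'}(g)⟩, Θ* = −H⁻¹D, and x⁺ = x + Σ_n θ*_n π_n(g). Then q(x) − q(x⁺) ≥ (1/(2κ(H))) · ‖g‖₂⁴ / ⟨g, Ag⟩, where κ(H) = λ_max(H)/λ_min(H). -/

import Mathlib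

/-!
The update `x⁺` minimises `q` exactly over `x + span {πₙ(g)}`, so the decrease is `½ DᵀH⁻¹D`.
If `V` is the matrix whose columns are the `πₙ(g)`, then `H = VᵀAV`, `D = Vᵀg` and `V𝟙 = g`.
Cauchy–Schwarz for the inner product defined by `H`, applied to `𝟙` and `H⁻¹D`, gives
`‖g‖⁴ = (𝟙ᵀD)² ≤ (𝟙ᵀH𝟙)(DᵀH⁻¹D) = ⟨g, Ag⟩ DᵀH⁻¹D`, and `κ(H) ≥ 1` absorbs the condition number.
-/

open Matrix

/-- The quadratic form `q(x) = ½ xᵀAx − xᵀb`. -/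
noncomputable def quadForm {m : ℕ} (A : Matrix (Fin m) (Fin m) ℝ) (b x : Fin m → ℝ) : ℝ :=
  (1 / 2 : ℝ) * (x ⬝ᵥ A.mulVec x) - x ⬝ᵥ b

/-- Block projection associated with the partition of `Fin m` given by the fibers of
`P : Fin m → Fin nh`. -/
def blockProj {m nh : ℕ} (P : Fin m → Fin nh) (k : Fin nh) (x : Fin m → ℝ) : Fin m → ℝ :=
  fun i => if P i = k then x i else 0

/-- Spectral condition number `κ(M) = λ_max(M) / λ_min(M)` of a symmetric real matrix
(junk value `0` if `M` is not symmetric). -/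
noncomputable def condNumber {n : ℕ} (M : Matrix (Fin n) (Fin n) ℝ) : ℝ :=
  letI := Classical.propDecidable M.IsHermitian
  if h : M.IsHermitian then (⨆ i, h.eigenvalues i) / (⨅ i, h.eigenvalues i) else 0

lemma Matrix.IsHermitian.dotProduct_mulVec_comm {ι : Type*} [Fintype ι] {M : Matrix ι ι ℝ}
    (hM : M.IsHermitian) (u v : ι → ℝ) : u ⬝ᵥ M *ᵥ v = v ⬝ᵥ M *ᵥ u := by
  rw [← dotProduct_transpose_mulVec, ← conjTranspose_eq_transpose_of_trivial, hM.eq]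

lemma dotProduct_transpose_mul_mul_mulVec {ι κ : Type*} [Fintype ι] [Fintype κ]
    (V : Matrix κ ι ℝ) (A : Matrix κ κ ℝ) (u v : ι → ℝ) :
    u ⬝ᵥ (Vᵀ * A * V) *ᵥ v = (V *ᵥ u) ⬝ᵥ A *ᵥ (V *ᵥ v) := by
  rw [← mulVec_mulVec, ← mulVec_mulVec, dotProduct_transpose_mulVec, dotProduct_comm]

lemma Matrix.PosDef.sq_dotProduct_le {ι : Type*} [Fintype ι] [DecidableEq ι]
    {H : Matrix ι ι ℝ} (hH : H.PosDef) (u w : ι → ℝ) :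
    (u ⬝ᵥ w) ^ 2 ≤ (w ⬝ᵥ H⁻¹ *ᵥ w) * (u ⬝ᵥ H *ᵥ u) := by
  set v := H⁻¹ *ᵥ w
  have hHv : H *ᵥ v = w := by
    rw [mulVec_mulVec, mul_nonsing_inv _ ((isUnit_iff_isUnit_det _).mp hH.isUnit), one_mulVec]
  have hnonneg : ∀ y, 0 ≤ toBilin' H y y := fun y => by
    simpa [toBilin'_apply'] using hH.posSemidef.dotProduct_mulVec_nonneg y
  have hCS := (toBilin' H).apply_mul_apply_le_of_forall_zero_le hnonneg u v
  simp only [toBilin'_apply', hH.1.dotProduct_mulVec_comm v u, hHv] at hCS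
  rwa [sq, dotProduct_comm w v, mul_comm (v ⬝ᵥ w)]

lemma inv_condNumber_le_one {n : ℕ} {H : Matrix (Fin n) (Fin n) ℝ} (hH : H.PosDef) :
    (condNumber H)⁻¹ ≤ 1 := by
  rcases isEmpty_or_nonempty (Fin n) with hn | hn
  · simp [condNumber, Real.iSup_of_isEmpty, Real.iInf_of_isEmpty]
  · rw [condNumber, dif_pos hH.1]
    obtain ⟨i, hi⟩ := Finite.exists_min hH.1.eigenvalues
    have hinf : ⨅ j, hH.1.eigenvalues j = hH.1.eigenvalues i :=
      le_antisymm (ciInf_le (Finite.bddBelow_range _) i) (le_ciInf hi)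
    have hsup : hH.1.eigenvalues i ≤ ⨆ j, hH.1.eigenvalues j :=
      le_ciSup (Finite.bddAbove_range _) i
    rw [hinf, inv_le_one_iff₀, le_div_iff₀ (hH.eigenvalues_pos i)]
    right
    simpa using hsup

section QuadraticForm

variable {m : ℕ} {A : Matrix (Fin m) (Fin m) ℝ}

lemma quadForm_add (hA : A.IsHermitian) (b x d : Fin m → ℝ) :
    quadForm A b (x + d)
      = quadForm A b x + d ⬝ᵥ (A *ᵥ x - b) + 1 / 2 * (d ⬝ᵥ A *ᵥ d) := by
  simp only [quadForm, mulVec_add, dotProduct_add, add_dotProduct, dotProduct_sub,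
    hA.dotProduct_mulVec_comm x d]
  ring

lemma quadForm_sub_quadForm_subspaceMinimizer {ι : Type*} [Fintype ι] [DecidableEq ι]
    (hA : A.IsHermitian) (b x : Fin m → ℝ) (V : Matrix (Fin m) ι ℝ)
    (hH : IsUnit (Vᵀ * A * V)) :
    quadForm A b x - quadForm A b (x + V *ᵥ -((Vᵀ * A * V)⁻¹ *ᵥ (Vᵀ *ᵥ (A *ᵥ x - b))))
      = 1 / 2 * ((Vᵀ *ᵥ (A *ᵥ x - b)) ⬝ᵥ (Vᵀ * A * V)⁻¹ *ᵥ (Vᵀ *ᵥ (A *ᵥ x - b))) := by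
  set D := Vᵀ *ᵥ (A *ᵥ x - b)
  set θ := (Vᵀ * A * V)⁻¹ *ᵥ D
  have hHθ : (Vᵀ * A * V) *ᵥ θ = D := by
    rw [mulVec_mulVec, mul_nonsing_inv _ ((isUnit_iff_isUnit_det _).mp hH), one_mulVec]
  have hlin : (V *ᵥ θ) ⬝ᵥ (A *ᵥ x - b) = θ ⬝ᵥ D := by
    rw [dotProduct_comm, ← dotProduct_transpose_mulVec]
  have hquad : (V *ᵥ θ) ⬝ᵥ A *ᵥ (V *ᵥ θ) = θ ⬝ᵥ D := by
    rw [← hHθ, dotProduct_transpose_mul_mul_mulVec]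
  rw [quadForm_add hA, mulVec_neg, neg_dotProduct, mulVec_neg, dotProduct_neg, neg_dotProduct,
    neg_neg, hlin, hquad, dotProduct_comm D]
  ring

end QuadraticForm

section Blocks

variable {m nh : ℕ} (P : Fin m → Fin nh) (g : Fin m → ℝ)

def blockColumns : Matrix (Fin m) (Fin nh) ℝ := Matrix.of fun i n => blockProj P n g i

lemma blockColumns_mulVec_apply (c : Fin nh → ℝ) (i : Fin m) :
    (blockColumns P g *ᵥ c) i = c (P i) * g i := by
  simp [blockColumns, blockProj, mulVec, dotProduct, mul_comm]

lemma blockColumns_mulVec (c : Fin nh → ℝ) :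
    blockColumns P g *ᵥ c = ∑ n, c n • blockProj P n g := by
  ext i
  simp [blockColumns_mulVec_apply, blockProj, Finset.sum_apply, mul_ite]

lemma blockColumns_mulVec_one : blockColumns P g *ᵥ 1 = g := by
  ext i
  simp [blockColumns_mulVec_apply]

lemma transpose_blockColumns_mulVec_apply (w : Fin m → ℝ) (n : Fin nh) :
    ((blockColumns P g)ᵀ *ᵥ w) n = blockProj P n g ⬝ᵥ w := rfl

lemma transpose_blockColumns_mul_mul_apply (A : Matrix (Fin m) (Fin m) ℝ) (n n' : Fin nh) :
    ((blockColumns P g)ᵀ * A * blockColumns P g) n n' =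
      blockProj P n g ⬝ᵥ A *ᵥ blockProj P n' g := by
  rw [mul_apply, dotProduct_mulVec]
  rfl

lemma injective_blockColumns_mulVec (hnz : ∀ n, blockProj P n g ≠ 0) :
    Function.Injective (blockColumns P g).mulVec := by
  intro c c' h
  funext n
  obtain ⟨i, hi⟩ := Function.ne_iff.mp (hnz n)
  have hPi : P i = n := by
    by_contra hne
    simp [blockProj, hne] at hi
  have hgi : g i ≠ 0 := by
    simpa [blockProj, hPi] using hi
  have := congrFun h i
  rw [blockColumns_mulVec_apply, blockColumns_mulVec_apply, hPi] at this
  exact mul_right_cancel₀ hgi this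

lemma posDef_transpose_blockColumns_mul_mul {A : Matrix (Fin m) (Fin m) ℝ} (hA : A.PosDef)
    (hnz : ∀ n, blockProj P n g ≠ 0) :
    ((blockColumns P g)ᵀ * A * blockColumns P g).PosDef := by
  simpa [conjTranspose_eq_transpose_of_trivial] using
    hA.conjTranspose_mul_mul_same (injective_blockColumns_mulVec P g hnz)

end Blocks

theorem stmt_6_general {m nh : ℕ} (A : Matrix (Fin m) (Fin m) ℝ) (hA : A.PosDef)
    (b x : Fin m → ℝ)
    (P : Fin m → Fin nh)
    (g : Fin m → ℝ) (hg : g = A.mulVec x - b)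
    (hnz : ∀ n, blockProj P n g ≠ 0)
    (D : Fin nh → ℝ) (hD : ∀ n, D n = g ⬝ᵥ blockProj P n g)
    (H : Matrix (Fin nh) (Fin nh) ℝ)
    (hH : ∀ n m', H n m' = blockProj P n g ⬝ᵥ A.mulVec (blockProj P m' g))
    (Θs : Fin nh → ℝ) (hΘs : Θs = -(H⁻¹.mulVec D))
    (xp : Fin m → ℝ) (hxp : xp = x + ∑ n, Θs n • blockProj P n g) :
    quadForm A b x - quadForm A b xp
      ≥ (1 / (2 * condNumber H)) * ((g ⬝ᵥ g) ^ 2 / (g ⬝ᵥ A.mulVec g)) := by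
  set V := blockColumns P g
  have hHV : H = Vᵀ * A * V := by
    ext n n'
    rw [hH, transpose_blockColumns_mul_mul_apply]
  have hDV : D = Vᵀ *ᵥ g := by
    ext n
    rw [hD, transpose_blockColumns_mulVec_apply, dotProduct_comm]
  have hHpd : H.PosDef := hHV ▸ posDef_transpose_blockColumns_mul_mul P g hA hnz
  have hdecrease : quadForm A b x - quadForm A b xp = 1 / 2 * (D ⬝ᵥ H⁻¹ *ᵥ D) := by
    have h := quadForm_sub_quadForm_subspaceMinimizer hA.1 b x V (hHV ▸ hHpd.isUnit)
    rwa [← hg, ← hDV, ← hHV, blockColumns_mulVec, ← hΘs, ← hxp] at h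
  have hCS : (g ⬝ᵥ g) ^ 2 ≤ (D ⬝ᵥ H⁻¹ *ᵥ D) * (g ⬝ᵥ A *ᵥ g) := by
    have hD1 : 1 ⬝ᵥ D = g ⬝ᵥ g := by
      rw [hDV, dotProduct_transpose_mulVec, blockColumns_mulVec_one]
    have hH1 : 1 ⬝ᵥ H *ᵥ 1 = g ⬝ᵥ A *ᵥ g := by
      rw [hHV, dotProduct_transpose_mul_mul_mulVec, blockColumns_mulVec_one]
    simpa only [hD1, hH1] using hHpd.sq_dotProduct_le 1 D
  have hgAg : 0 ≤ g ⬝ᵥ A *ᵥ g := by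
    simpa using hA.posSemidef.dotProduct_mulVec_nonneg g
  have hκ : 1 / (2 * condNumber H) ≤ 1 / 2 := by
    rw [one_div, mul_inv, one_div]
    linarith [inv_condNumber_le_one hHpd]
  rw [ge_iff_le, hdecrease]
  calc 1 / (2 * condNumber H) * ((g ⬝ᵥ g) ^ 2 / (g ⬝ᵥ A *ᵥ g))
      ≤ 1 / 2 * ((g ⬝ᵥ g) ^ 2 / (g ⬝ᵥ A *ᵥ g)) := by gcongr
    _ ≤ 1 / 2 * (D ⬝ᵥ H⁻¹ *ᵥ D) := by
        gcongr
        exact div_le_of_le_mul₀ hgAg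
          (by simpa using hHpd.inv.posSemidef.dotProduct_mulVec_nonneg D) hCS

/-- Per-step decrease bound `q(x) − q(x⁺) ≥ (1/(2κ(H))) ‖g‖₂⁴ / ⟨g, A g⟩` for the enhanced
steepest-descent update `x⁺ = x + Σₙ θ*ₙ πₙ(g)` with `Θ* = −H⁻¹ D`. -/
theorem stmt_6 {m nh : ℕ} (A : Matrix (Fin m) (Fin m) ℝ) (hA : A.PosDef)
    (b x : Fin m → ℝ)
    (P : Fin m → Fin nh) (hP : Function.Surjective P)
    (g : Fin m → ℝ) (hg : g = A.mulVec x - b)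
    (hnz : ∀ n, blockProj P n g ≠ 0)
    (D : Fin nh → ℝ) (hD : ∀ n, D n = g ⬝ᵥ blockProj P n g)
    (H : Matrix (Fin nh) (Fin nh) ℝ)
    (hH : ∀ n m', H n m' = blockProj P n g ⬝ᵥ A.mulVec (blockProj P m' g))
    (Θs : Fin nh → ℝ) (hΘs : Θs = -(H⁻¹.mulVec D))
    (xp : Fin m → ℝ) (hxp : xp = x + ∑ n, Θs n • blockProj P n g) :
    quadForm A b x - quadForm A b xp
      ≥ (1 / (2 * condNumber H)) * ((g ⬝ᵥ g) ^ 2 / (g ⬝ᵥ A.mulVec g)) :=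
  stmt_6_general A hA b x P g hg hnz D hD H hH Θs hΘs xp hxp
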